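/- Exact cancellation (Lemma SETZ-FD2, first case): if x and y are nonzero precision-p binary floating-point numbers with opposite signs, equal exponents e_x = e_y, and equal trailing exponents f_x = f_y, then either x + y = 0, or x + y is exactly representable with exponent e_s satisfying f_x + 1 ≤ e_s ≤ e_x - 1 and trailing exponent f_s satisfying f_x + 1 ≤ f_s ≤ e_s; in all cases TwoSum(x, y) = (x + y, 0), i.e., the rounding error is zero. -/

import Mathlib

/-- t is representable in precision-p binary floating-point arithmetic. -/
def FpRep (p : ℕ) (t : ℝ) : Prop :=
  ∃ (m g : ℤ), |m| < (2 : ℤ) ^ p ∧ t = (m : ℝ) * (2 : ℝ) ^ g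

/-- R rounds to a nearest precision-p floating-point number. -/
def IsRNE (p : ℕ) (R : ℝ → ℝ) : Prop :=
  ∀ t : ℝ, FpRep p (R t) ∧ ∀ z : ℝ, FpRep p z → |t - R t| ≤ |t - z|

/-- x is a nonzero precision-p binary float with exponent e and trailing
exponent f. -/
def FpTrail (p : ℕ) (e f : ℤ) (x : ℝ) : Prop :=
  ∃ M : ℤ, Odd M ∧ x = (M : ℝ) * (2 : ℝ) ^ f ∧
    (2 : ℝ) ^ e ≤ |x| ∧ |x| < (2 : ℝ) ^ (e + 1) ∧ e - f ≤ (p : ℤ) - 1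


/-!
Writing `x = M·2^f` and `y = M'·2^f` with `M, M'` odd, the sum `x + y = (M + M')·2^f` has an even
integer coefficient, so once it is reduced to an odd coefficient its trailing exponent exceeds `f`.
Since `|x|` and `|y|` both lie in `[2^e, 2^(e+1))` and the signs differ, `|x + y| < 2^e`. The
coefficient of `x + y` relative to `2^f` therefore has fewer than `e - f + 1 ≤ p` bits, so `x + y` is
a float, and a round-to-nearest function returns a float argument unchanged.
-/

theorem FpRep.zero (p : ℕ) : FpRep p 0 :=
  ⟨0, 0, by positivity, by simp⟩

theorem fpRep_of_abs_lt {p : ℕ} {t : ℝ} {N g : ℤ} (ht : t = N * (2 : ℝ) ^ g)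
    (hlt : |t| < (2 : ℝ) ^ (g + p)) : FpRep p t := by
  refine ⟨N, g, ?_, ht⟩
  have hpos : (0 : ℝ) < 2 ^ g := by positivity
  have hN : |(N : ℝ)| * 2 ^ g < 2 ^ (p : ℤ) * 2 ^ g :=
    calc |(N : ℝ)| * 2 ^ g = |t| := by rw [ht, abs_mul, abs_of_pos hpos]
      _ < 2 ^ (g + p) := hlt
      _ = 2 ^ (p : ℤ) * 2 ^ g := by rw [add_comm, zpow_add₀ two_ne_zero]
  have := lt_of_mul_lt_mul_right hN hpos.le
  rw [zpow_natCast] at this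
  exact_mod_cast this

theorem IsRNE.apply_eq_self {p : ℕ} {R : ℝ → ℝ} (hR : IsRNE p R) {t : ℝ} (ht : FpRep p t) :
    R t = t := by
  have h := (hR t).2 t ht
  rw [sub_self, abs_zero, abs_nonpos_iff, sub_eq_zero] at h
  exact h.symm

theorem IsRNE.sub_apply_eq_zero {p : ℕ} {R : ℝ → ℝ} (hR : IsRNE p R) {t : ℝ}
    (ht : FpRep p t) : t - R t = 0 := by
  rw [hR.apply_eq_self ht, sub_self]

theorem abs_add_lt_of_mul_neg {α : Type*} [CommRing α] [LinearOrder α] [IsStrictOrderedRing α]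
    {a b c d : α} (hab : a * b < 0) (ha : c ≤ |a|) (ha' : |a| < d) (hb : c ≤ |b|)
    (hb' : |b| < d) : |a + b| < d - c := by
  rw [abs_lt]
  rcases mul_neg_iff.mp hab with ⟨ha0, hb0⟩ | ⟨ha0, hb0⟩
  · rw [abs_of_pos ha0] at ha ha'
    rw [abs_of_neg hb0] at hb hb'
    constructor <;> linarith
  · rw [abs_of_neg ha0] at ha ha'
    rw [abs_of_pos hb0] at hb hb'
    constructor <;> linarith

theorem Int.exists_odd_mul_two_pow {m : ℤ} (hm : m ≠ 0) :
    ∃ (N : ℤ) (k : ℕ), Odd N ∧ m = N * 2 ^ k := by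
  obtain ⟨k, o, ho, hmo⟩ := Nat.exists_eq_two_pow_mul_odd (Int.natAbs_ne_zero.mpr hm)
  rcases Int.natAbs_eq m with h | h
  · exact ⟨o, k, Int.odd_coe_nat o |>.mpr ho, by rw [h, hmo]; push_cast; ring⟩
  · exact ⟨-o, k, (Int.odd_coe_nat o |>.mpr ho).neg, by rw [h, hmo]; push_cast; ring⟩

theorem Odd.add_odd_eq_odd_mul_two_pow {M M' : ℤ} (hM : Odd M) (hM' : Odd M')
    (hsum : M + M' ≠ 0) : ∃ (N : ℤ) (k : ℕ), Odd N ∧ 1 ≤ k ∧ M + M' = N * 2 ^ k := by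
  obtain ⟨N, k, hN, hNk⟩ := Int.exists_odd_mul_two_pow hsum
  refine ⟨N, k, hN, Nat.one_le_iff_ne_zero.mpr fun hk => ?_, hNk⟩
  rw [hk, pow_zero, mul_one] at hNk
  exact Int.not_even_iff_odd.mpr hN (hNk ▸ hM.add_odd hM')

theorem le_log_abs_int_mul_zpow {N g : ℤ} (hN : N ≠ 0) :
    g ≤ Int.log 2 |(N : ℝ) * (2 : ℝ) ^ g| := by
  have hpos : (0 : ℝ) < 2 ^ g := by positivity
  have hN1 : (1 : ℝ) ≤ |(N : ℝ)| := by exact_mod_cast Int.one_le_abs hN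
  rw [← Int.zpow_le_iff_le_log one_lt_two (by positivity), abs_mul, abs_of_pos hpos]
  push_cast
  nlinarith

theorem exact_cancellation_general (p : ℕ) (R : ℝ → ℝ) (hR : IsRNE p R)
    (x y : ℝ) (ex fx : ℤ)
    (hx : FpTrail p ex fx x) (hy : FpTrail p ex fx y)
    (hsign : x * y < 0) :
    (x + y = 0 ∨
      ∃ (N es fs : ℤ), Odd N ∧ x + y = (N : ℝ) * (2 : ℝ) ^ fs ∧
        (2 : ℝ) ^ es ≤ |x + y| ∧ |x + y| < (2 : ℝ) ^ (es + 1) ∧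
        fx + 1 ≤ es ∧ es ≤ ex - 1 ∧ fx + 1 ≤ fs ∧ fs ≤ es) ∧
      R (x + y) = x + y ∧ (x + y) - R (x + y) = 0 := by
  obtain ⟨M, hM, hxeq, hxlo, hxhi, hprec⟩ := hx
  obtain ⟨M', hM', hyeq, hylo, hyhi, -⟩ := hy
  have hxy : x + y = ((M + M' : ℤ) : ℝ) * 2 ^ fx := by rw [hxeq, hyeq]; push_cast; ring
  have hlt : |x + y| < 2 ^ ex := by
    have := abs_add_lt_of_mul_neg hsign hxlo hxhi hylo hyhi
    rwa [zpow_add_one₀ two_ne_zero, mul_two, add_sub_cancel_right] at this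
  by_cases hsum : M + M' = 0
  · have hs0 : x + y = 0 := by rw [hxy, hsum, Int.cast_zero, zero_mul]
    rw [hs0]
    exact ⟨Or.inl rfl, hR.apply_eq_self (FpRep.zero p), hR.sub_apply_eq_zero (FpRep.zero p)⟩
  obtain ⟨N, k, hN, hk, hNk⟩ := hM.add_odd_eq_odd_mul_two_pow hM' hsum
  have hs : x + y = N * (2 : ℝ) ^ (fx + k) := by
    rw [hxy, hNk, zpow_add₀ two_ne_zero, zpow_natCast]; push_cast; ring
  have hN0 : N ≠ 0 := by rintro rfl; simp at hN
  have hspos : 0 < |x + y| := by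
    rw [hs, abs_pos]; exact mul_ne_zero (Int.cast_ne_zero.mpr hN0) (by positivity)
  have hfs : fx + k ≤ Int.log 2 |x + y| := hs ▸ le_log_abs_int_mul_zpow hN0
  have hes : Int.log 2 |x + y| < ex :=
    (Int.lt_zpow_iff_log_lt one_lt_two hspos).mp (by exact_mod_cast hlt)
  have hrep : FpRep p (x + y) :=
    fpRep_of_abs_lt hs <| hlt.trans_le (zpow_le_zpow_right₀ one_le_two (by omega))
  refine ⟨Or.inr ⟨N, Int.log 2 |x + y|, fx + k, hN, hs, ?_, ?_, by omega, by omega, by omega, hfs⟩,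
    hR.apply_eq_self hrep, hR.sub_apply_eq_zero hrep⟩
  · exact_mod_cast Int.zpow_log_le_self one_lt_two hspos
  · exact_mod_cast Int.lt_zpow_succ_log_self one_lt_two |x + y|

/-- Exact cancellation (Lemma SETZ-FD2 core): opposite signs, equal exponents,
equal trailing exponents ⟹ x + y = 0, or x + y is exactly representable with
exponent in [f_x + 1, e_x - 1] and trailing exponent in [f_x + 1, e_s];
in all cases TwoSum(x, y) = (x + y, 0). -/
theorem exact_cancellation (p : ℕ) (hp : 1 ≤ p) (R : ℝ → ℝ) (hR : IsRNE p R)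
    (x y : ℝ) (ex fx : ℤ)
    (hx : FpTrail p ex fx x) (hy : FpTrail p ex fx y)
    (hsign : x * y < 0) :
    (x + y = 0 ∨
      ∃ (N es fs : ℤ), Odd N ∧ x + y = (N : ℝ) * (2 : ℝ) ^ fs ∧
        (2 : ℝ) ^ es ≤ |x + y| ∧ |x + y| < (2 : ℝ) ^ (es + 1) ∧
        fx + 1 ≤ es ∧ es ≤ ex - 1 ∧ fx + 1 ≤ fs ∧ fs ≤ es) ∧
      R (x + y) = x + y ∧ (x + y) - R (x + y) = 0 :=
  exact_cancellation_general p R hR x y ex fx hx hy hsign
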